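/- arXiv:1112.3719 — 2 statements merged into one kernel-verified Lean document; each statement's English description precedes it below -/
import Mathlib

section
/- For integers k >= v >= 1, the quantity (2k/(2v)) * sum over nonnegative integers s_1 + s_2 + ... + s_{2v} = k - v of C_{s_1} C_{s_2} ... C_{s_{2v}} equals binomial(2k, k-v). -/
open Finset PowerSeries

/-!
The sum is the coefficient `c(n, m)` of `x^m` in `C(x)^n`, where `C = ∑ catalan s x^s` and
`n = 2v`, `m = k - v`. From `C = 1 + x C²` we get `C^(n+1) = C^n + x C^(n+2)`, a Pascal-type
recursion `c(n+1, m+1) = c(n, m+1) + c(n+2, m)` which the ballot numbers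
`binom(2m+n+1, m+1) - binom(2m+n+1, m)` also satisfy; so `c(n, m+1)` is that difference, and
`(2m + n) c(n, m) = n binom(2m+n, m)` follows from the ratio of neighbouring binomials.
-/

theorem PowerSeries.coeff_pow_eq_sum_antidiagonalTuple {R : Type*} [CommSemiring R]
    (φ : R⟦X⟧) (n m : ℕ) :
    coeff m (φ ^ n) = ∑ f ∈ Nat.antidiagonalTuple n m, ∏ i, coeff (f i) φ := by
  rw [← Fin.prod_const, coeff_prod]
  have : (finsuppAntidiag univ m).map Finsupp.equivFunOnFinite.toEmbedding
      = Nat.antidiagonalTuple n m := by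
    ext f
    simp [Nat.mem_antidiagonalTuple]
  rw [← this, sum_map]
  rfl

theorem Finset.sum_filter_fin_eq_sum_antidiagonalTuple {M : Type*} [AddCommMonoid M]
    (n m : ℕ) (g : (Fin n → ℕ) → M) :
    ∑ f ∈ (univ : Finset (Fin n → Fin (m + 1))).filter (fun f => ∑ j, (f j).val = m),
      g (fun j => f j) = ∑ f ∈ Nat.antidiagonalTuple n m, g f := by
  refine sum_bij (fun f _ j => f j) ?_ ?_ ?_ (fun _ _ => rfl)
  · intro f hf
    simpa [Nat.mem_antidiagonalTuple] using hf
  · intro f _ f' _ h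
    funext j
    exact Fin.ext (congrFun h j)
  · intro f hf
    rw [Nat.mem_antidiagonalTuple] at hf
    have hle : ∀ j, f j < m + 1 := fun j =>
      Nat.lt_succ_of_le (hf ▸ single_le_sum (fun _ _ => Nat.zero_le _) (mem_univ j))
    exact ⟨fun j => ⟨f j, hle j⟩, by simpa using hf, rfl⟩

namespace PowerSeries

theorem coeff_zero_catalanSeries_pow (n : ℕ) : coeff 0 (catalanSeries ^ n) = 1 := by
  simp [catalanSeries_constantCoeff]

theorem coeff_succ_catalanSeries_pow_succ (m n : ℕ) :
    coeff (m + 1) (catalanSeries ^ (n + 1))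
      = coeff (m + 1) (catalanSeries ^ n) + coeff m (catalanSeries ^ (n + 2)) := by
  have h : catalanSeries ^ (n + 1) = catalanSeries ^ n + X * catalanSeries ^ (n + 2) := by
    calc catalanSeries ^ (n + 1) = catalanSeries ^ n * (catalanSeries ^ 2 * X + 1) := by
          rw [catalanSeries_sq_mul_X_add_one, pow_succ]
      _ = catalanSeries ^ n + X * catalanSeries ^ (n + 2) := by ring
  rw [h, map_add, coeff_succ_X_mul]

theorem coeff_succ_catalanSeries_pow_add_choose (m n : ℕ) :
    coeff (m + 1) (catalanSeries ^ n) + (2 * m + n + 1).choose m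
      = (2 * m + n + 1).choose (m + 1) := by
  induction m generalizing n with
  | zero =>
    induction n with
    | zero => simp [coeff_one]
    | succ n ih =>
      rw [coeff_succ_catalanSeries_pow_succ, coeff_zero_catalanSeries_pow]
      simp only [mul_zero, zero_add, Nat.choose_zero_right, Nat.choose_one_right] at ih ⊢
      omega
  | succ m ihm =>
    induction n with
    | zero =>
      have hsymm : (2 * m + 3).choose (m + 1) = (2 * m + 3).choose (m + 2) :=
        Nat.choose_symm_of_eq_add (by omega)
      simpa [coeff_one, show 2 * (m + 1) + 0 + 1 = 2 * m + 3 by ring] using hsymm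
    | succ n ihn =>
      have hnext := ihm (n + 2)
      rw [coeff_succ_catalanSeries_pow_succ]
      rw [show 2 * (m + 1) + (n + 1) + 1 = 2 * m + n + 3 + 1 by ring,
        Nat.choose_succ_succ' _ (m + 1), Nat.choose_succ_succ' _ m]
      rw [show 2 * (m + 1) + n + 1 = 2 * m + n + 3 by ring] at ihn
      rw [show 2 * m + (n + 2) + 1 = 2 * m + n + 3 by ring] at hnext
      omega

theorem mul_coeff_catalanSeries_pow (m n : ℕ) :
    (2 * m + n) * coeff m (catalanSeries ^ n) = n * (2 * m + n).choose m := by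
  cases m with
  | zero => simp [coeff_zero_catalanSeries_pow]
  | succ m =>
    have hballot := coeff_succ_catalanSeries_pow_add_choose m n
    have hratio := Nat.choose_succ_right_eq (2 * m + n + 1) m
    have hpascal := Nat.choose_succ_succ' (2 * m + n + 1) m
    rw [show 2 * m + n + 1 - m = m + n + 1 by omega] at hratio
    rw [show 2 * (m + 1) + n = 2 * m + n + 1 + 1 by ring, hpascal]
    zify at hballot hratio ⊢
    linear_combination (2 * (m : ℤ) + n + 2) * hballot + 2 * hratio

end PowerSeries

open Classical in
theorem placements_eq_choose_general (k v : ℕ) (hvk : v ≤ k) :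
    2*k *
      ∑ f ∈ (Finset.univ : Finset (Fin (2*v) → Fin (k - v + 1))).filter
          (fun f => ∑ j, (f j).val = k - v),
        ∏ j, catalan (f j).val
    = 2*v * Nat.choose (2*k) (k - v) := by
  rw [sum_filter_fin_eq_sum_antidiagonalTuple (2 * v) (k - v) (fun f => ∏ j, catalan (f j))]
  simp_rw [← catalanSeries_coeff]
  rw [← coeff_pow_eq_sum_antidiagonalTuple, show 2 * k = 2 * (k - v) + 2 * v by omega]
  exact mul_coeff_catalanSeries_pow (k - v) (2 * v)

open Classical in
/-- For `k ≥ v ≥ 1`, `(2k/(2v)) ∑_{s₁+⋯+s_{2v} = k-v} C_{s₁} ⋯ C_{s_{2v}}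
= C(2k, k-v)` (stated multiplied through by `2v > 0`): the number of ways to
place `2k - 2v` vertices in non-crossing, non-dividing pairs around a partial
pairing of `2v` vertices on a circle of `2k` positions. -/
theorem placements_eq_choose (k v : ℕ) (hv : 1 ≤ v) (hvk : v ≤ k) :
    2*k *
      ∑ f ∈ (Finset.univ : Finset (Fin (2*v) → Fin (k - v + 1))).filter
          (fun f => ∑ j, (f j).val = k - v),
        ∏ j, catalan (f j).val
    = 2*v * Nat.choose (2*k) (k - v) :=
  placements_eq_choose_general k v hvk
end

section
/- The expected number of vertices involved in a crossing, among all uniformly random perfect matchings of 2k vertices on a circle, equals 2k*(2k-3)/(2k-1) - (2k/(2k-1)) * sum_{m=2}^{k-1} binomial(k-2, m-2)/binomial(2k-3, 2m-3), and this expression equals 2k - 2 - 2/k + O(1/k^2) as k tends to infinity. -/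
/-!
By linearity of expectation `expCross k = 2k (1 - P)`, where `P` is the probability that the chord
at a given vertex `i` crosses no other chord (the same for every `i`). That happens exactly when the
pairing maps the arc cut off by this chord into itself. If the chord joins `i` to the vertex
`2s + 1` steps further, such a pairing is a pairing of that arc (`2s` vertices) together with one of
the complementary arc (`2(k-1-s)` vertices), so `P = ∑ₛ (2s-1)‼ (2(k-1-s)-1)‼ / (2k-1)‼`. The
identity `(2s+1)‼ (2u-1)‼ C(2(s+u)+1, 2s+1) = (2(s+u)+1)‼ C(s+u, s)` turns this into the binomial
sum. For the asymptotics, a product `(2a+1)‼ (2b+1)‼` with `a + b` fixed is largest when `a` or `b`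
is smallest, so all terms except the three outermost at each end contribute `O(k⁻³)` to `P`.
-/

open Finset

/-- A pairing (perfect matching) of `n` vertices on a circle, encoded as a
fixed-point-free involution. -/
def IsPairing {n : ℕ} (f : Fin n → Fin n) : Prop :=
  (∀ i, f (f i) = i) ∧ ∀ i, f i ≠ i

/-- `x` lies strictly between `a` and `b` going clockwise around the circle. -/
def CircBtw {n : ℕ} (a b x : Fin n) : Prop :=
  0 < (x - a).val ∧ (x - a).val < (b - a).val

/-- The chord through `i` and the chord through `j` cross: exactly one of
`j`, `f j` lies strictly between `i` and `f i` clockwise. -/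
def ChordsCross {n : ℕ} (f : Fin n → Fin n) (i j : Fin n) : Prop :=
  Xor' (CircBtw i (f i) j) (CircBtw i (f i) (f j))

/-- Vertex `i` is involved in a crossing: its chord crosses some other chord. -/
def CrossVert {n : ℕ} (f : Fin n → Fin n) (i : Fin n) : Prop :=
  ∃ j, j ≠ i ∧ j ≠ f i ∧ ChordsCross f i j

open Classical in
/-- The set of all pairings of `2k` vertices on a circle. -/
noncomputable def pairings (k : ℕ) : Finset (Fin (2*k) → Fin (2*k)) :=
  Finset.univ.filter IsPairing

open Classical in
/-- The number of vertices involved in at least one crossing. -/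
noncomputable def crossCount (k : ℕ) (f : Fin (2*k) → Fin (2*k)) : ℕ :=
  (Finset.univ.filter (fun i => CrossVert f i)).card

open Classical in
/-- `Cr k m`: the number of pairings of `2k` vertices with exactly `m`
vertices involved in a crossing. -/
noncomputable def Cr (k m : ℕ) : ℕ :=
  ((pairings k).filter (fun f => crossCount k f = m)).card

/-- The expected number of vertices involved in a crossing, over a uniformly
random pairing of `2k` vertices on a circle. -/
noncomputable def expCross (k : ℕ) : ℚ :=
  (∑ f ∈ pairings k, (crossCount k f : ℚ)) / ((pairings k).card : ℚ)

open Function Nat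

section PairingsOn

variable {α : Type*} [Fintype α] [DecidableEq α]

open Classical in
noncomputable def pairingsOn (s : Finset α) : Finset (α → α) :=
  univ.filter fun f => Involutive f ∧ ∀ x, f x ≠ x ↔ x ∈ s

lemma mem_pairingsOn {s : Finset α} {f : α → α} :
    f ∈ pairingsOn s ↔ Involutive f ∧ ∀ x, f x ≠ x ↔ x ∈ s := by
  simp [pairingsOn]

lemma swap_comp_mem_pairingsOn_sdiff {s : Finset α} {a b : α} {f : α → α}
    (hf : f ∈ pairingsOn s) (hfa : f a = b) :
    Equiv.swap a b ∘ f ∈ pairingsOn (s \ {a, b}) := by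
  rw [mem_pairingsOn] at hf ⊢
  obtain ⟨hinv, hsupp⟩ := hf
  have hinv' : ∀ x, f (f x) = x := hinv
  refine ⟨fun x => ?_, fun x => ?_⟩
  · simp only [comp_apply, Equiv.swap_apply_def]
    grind
  · simp only [comp_apply, Equiv.swap_apply_def, mem_sdiff, mem_insert, mem_singleton]
    grind

lemma swap_comp_mem_pairingsOn {s : Finset α} {a b : α} {g : α → α}
    (hg : g ∈ pairingsOn (s \ {a, b})) (ha : a ∈ s) (hb : b ∈ s) (hab : a ≠ b) :
    Equiv.swap a b ∘ g ∈ pairingsOn s := by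
  rw [mem_pairingsOn] at hg ⊢
  obtain ⟨hinv, hsupp⟩ := hg
  have hinv' : ∀ x, g (g x) = x := hinv
  simp only [mem_sdiff, mem_insert, mem_singleton] at hsupp
  refine ⟨fun x => ?_, fun x => ?_⟩
  · simp only [comp_apply, Equiv.swap_apply_def]
    grind
  · simp only [comp_apply, Equiv.swap_apply_def]
    grind

lemma filter_apply_eq_pairingsOn {s : Finset α} {a b : α} (ha : a ∈ s) (hb : b ∈ s)
    (hab : a ≠ b) :
    (pairingsOn s).filter (· a = b) = (pairingsOn (s \ {a, b})).map
      ⟨(Equiv.swap a b ∘ ·), (Equiv.swap a b).injective.comp_left⟩ := by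
  ext f
  simp only [mem_filter, mem_map, Embedding.coeFn_mk]
  constructor
  · rintro ⟨hf, hfa⟩
    exact ⟨_, swap_comp_mem_pairingsOn_sdiff hf hfa, by ext; simp⟩
  · rintro ⟨g, hg, rfl⟩
    have hga : g a = a := by simpa using (mem_pairingsOn.1 hg).2 a
    exact ⟨swap_comp_mem_pairingsOn hg ha hb hab, by simp [hga]⟩

def numPairings (n : ℕ) : ℕ := if Even n then (n - 1)‼ else 0

lemma numPairings_succ (n : ℕ) : numPairings (n + 1) = n * numPairings (n - 1) := by
  rcases n with _ | n
  · simp [numPairings]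
  · simp only [numPairings, Nat.even_add_one, add_tsub_cancel_right, not_not]
    split_ifs <;> simp [Nat.doubleFactorial_add_one]

lemma numPairings_two_mul (s : ℕ) : numPairings (2 * s) = (2 * s - 1)‼ := by
  simp [numPairings]

lemma numPairings_two_mul_add_one (s : ℕ) : numPairings (2 * s + 1) = 0 := by
  simp [numPairings]

lemma card_pairingsOn (s : Finset α) : #(pairingsOn s) = numPairings #s := by
  induction s using Finset.strongInduction with
  | H s ih =>
  obtain rfl | ⟨a, ha⟩ := s.eq_empty_or_nonempty
  · have : pairingsOn (∅ : Finset α) = {id} := by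
      ext f
      simp only [mem_pairingsOn, notMem_empty, iff_false, not_not, mem_singleton]
      exact ⟨fun h => funext h.2, fun h => h ▸ ⟨fun _ => rfl, fun _ => rfl⟩⟩
    simp [this, numPairings]
  have hfiber : ∀ b ∈ s.erase a,
      #((pairingsOn s).filter (· a = b)) = numPairings (#s - 2) := by
    intro b hb
    obtain ⟨hba, hb⟩ := mem_erase.1 hb
    have hsub : s \ {a, b} ⊂ s := sdiff_ssubset (by simp [insert_subset_iff, ha, hb]) (by simp)
    rw [filter_apply_eq_pairingsOn ha hb hba.symm, card_map, ih _ hsub,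
      card_sdiff_of_subset (by simp [insert_subset_iff, ha, hb]), card_pair hba.symm]
  have hmaps : ∀ f ∈ pairingsOn s, f a ∈ s.erase a := by
    intro f hf
    obtain ⟨hinv, hsupp⟩ := mem_pairingsOn.1 hf
    have hfa : f a ≠ a := (hsupp a).2 ha
    exact mem_erase.2 ⟨hfa, (hsupp (f a)).1 (by rwa [hinv a, ne_comm])⟩
  rw [card_eq_sum_card_fiberwise hmaps, sum_congr rfl hfiber, sum_const, card_erase_of_mem ha,
    smul_eq_mul, show #s - 2 = #s - 1 - 1 by omega, ← numPairings_succ,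
    Nat.sub_add_cancel (card_pos.2 ⟨a, ha⟩)]

lemma card_filter_mapsTo_pairingsOn {s t : Finset α} (hts : t ⊆ s) :
    #((pairingsOn s).filter fun f => ∀ x ∈ t, f x ∈ t) =
      #(pairingsOn t) * #(pairingsOn (s \ t)) := by
  rw [← card_product]
  refine card_nbij' (fun f => (t.piecewise f id, t.piecewise id f))
    (fun g => t.piecewise g.1 g.2) ?_ ?_ ?_ ?_
  · intro f hf
    simp only [coe_filter, mem_pairingsOn, Set.mem_ofPred_eq] at hf
    obtain ⟨⟨hinv, hsupp⟩, hmaps⟩ := hf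
    have hinv' : ∀ x, f (f x) = x := hinv
    simp only [coe_product, Set.mem_prod, mem_coe, mem_pairingsOn, Finset.piecewise, mem_sdiff]
    refine ⟨⟨fun x => ?_, fun x => ?_⟩, fun x => ?_, fun x => ?_⟩ <;>
      grind [Finset.piecewise]
  · rintro ⟨g, h⟩ hgh
    simp only [coe_product, Set.mem_prod, mem_coe, mem_pairingsOn, mem_sdiff] at hgh
    obtain ⟨⟨hginv, hg⟩, hhinv, hh⟩ := hgh
    have hginv' : ∀ x, g (g x) = x := hginv
    have hhinv' : ∀ x, h (h x) = x := hhinv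
    simp only [coe_filter, mem_pairingsOn, Set.mem_ofPred_eq, Finset.piecewise]
    refine ⟨⟨fun x => ?_, fun x => ?_⟩, fun x hx => ?_⟩ <;> grind [Finset.piecewise]
  · intro f _
    ext x
    by_cases hx : x ∈ t <;> simp [hx]
  · rintro ⟨g, h⟩ hgh
    simp only [coe_product, Set.mem_prod, mem_coe, mem_pairingsOn, mem_sdiff] at hgh
    obtain ⟨⟨-, hg⟩, -, hh⟩ := hgh
    ext x <;> by_cases hx : x ∈ t <;> grind [Finset.piecewise]

lemma card_filter_apply_eq_mapsTo_pairingsOn {s t : Finset α} {a b : α} (ha : a ∈ s)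
    (hb : b ∈ s) (hab : a ≠ b) (hts : t ⊆ s \ {a, b}) :
    #((pairingsOn s).filter fun f => f a = b ∧ ∀ x ∈ t, f x ∈ t) =
      #(pairingsOn t) * #(pairingsOn ((s \ {a, b}) \ t)) := by
  have hat : a ∉ t := fun h => by simpa using hts h
  have hbt : b ∉ t := fun h => by simpa using hts h
  rw [← filter_filter, filter_apply_eq_pairingsOn ha hb hab, filter_map, card_map,
    ← card_filter_mapsTo_pairingsOn hts]
  congr 1
  refine filter_congr fun g _ => forall₂_congr fun x _ => ?_
  simp only [comp_apply, Embedding.coeFn_mk, Equiv.swap_apply_def]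
  split_ifs <;> simp_all

end PairingsOn

lemma sum_range_two_mul_add_one_eq_of_odd {M : Type*} [AddCommMonoid M] (f : ℕ → M) (m : ℕ)
    (hf : ∀ s < m, f (2 * s + 1) = 0) :
    ∑ e ∈ range (2 * m + 1), f e = ∑ s ∈ range (m + 1), f (2 * s) := by
  induction m with
  | zero => simp
  | succ m ih =>
    rw [show 2 * (m + 1) + 1 = 2 * m + 1 + 1 + 1 by ring, sum_range_succ, sum_range_succ,
      ih fun s hs => hf s (by omega), hf m (by omega), add_zero, sum_range_succ (n := m + 1)]
    rfl

section Circle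

variable {n : ℕ}

instance (a b : Fin n) : DecidablePred (CircBtw a b) :=
  fun _ => inferInstanceAs (Decidable (_ ∧ _))

def arc (a b : Fin n) : Finset (Fin n) := univ.filter (CircBtw a b)

lemma mem_arc {a b x : Fin n} : x ∈ arc a b ↔ CircBtw a b x := by simp [arc]

lemma left_notMem_arc (a b : Fin n) : a ∉ arc a b := by
  have : NeZero n := ⟨a.pos.ne'⟩
  simp [mem_arc, CircBtw]

lemma right_notMem_arc (a b : Fin n) : b ∉ arc a b := by
  simp [mem_arc, CircBtw]

lemma arc_subset_sdiff (a b : Fin n) : arc a b ⊆ univ \ {a, b} := fun x hx => by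
  simp only [mem_sdiff, mem_univ, mem_insert, mem_singleton, true_and]
  rintro (rfl | rfl)
  exacts [left_notMem_arc _ _ hx, right_notMem_arc _ _ hx]

lemma card_arc (a b : Fin n) : #(arc a b) = (b - a).val - 1 := by
  have : NeZero n := ⟨a.pos.ne'⟩
  trans #(Ioo (0 : Fin n) (b - a))
  · refine card_nbij' (· - a) (· + a) ?_ ?_ ?_ ?_ <;> intro x hx <;>
      simp_all [mem_arc, CircBtw]
  · simp [Fin.card_Ioo]

lemma not_crossVert_iff_forall_mem_arc {f : Fin n → Fin n} (hf : Involutive f) (i : Fin n) :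
    ¬ CrossVert f i ↔ ∀ x ∈ arc i (f i), f x ∈ arc i (f i) := by
  simp only [mem_arc, CrossVert, ChordsCross, not_exists, not_and]
  constructor
  · intro h x hx
    by_contra hfx
    exact h x (ne_of_mem_of_not_mem (mem_arc.2 hx) (left_notMem_arc _ _))
      (ne_of_mem_of_not_mem (mem_arc.2 hx) (right_notMem_arc _ _)) (Or.inl ⟨hx, hfx⟩)
  · rintro h j - - (⟨hj, hfj⟩ | ⟨hfj, hj⟩)
    · exact hfj (h j hj)
    · exact hj (hf j ▸ h _ hfj)

end Circle

lemma pairings_eq_pairingsOn_univ (k : ℕ) : pairings k = pairingsOn univ := by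
  ext f
  simp [pairings, mem_pairingsOn, IsPairing, Involutive]

def uncrossedCount (k : ℕ) : ℕ := ∑ s ∈ range k, (2 * s - 1)‼ * (2 * (k - 1 - s) - 1)‼

open Classical in
lemma card_filter_apply_eq_not_crossVert {k : ℕ} {i j : Fin (2 * k)} (hij : i ≠ j) :
    #((pairings k).filter fun f => ¬ CrossVert f i ∧ f i = j) =
      numPairings ((j - i).val - 1) * numPairings (2 * k - 2 - ((j - i).val - 1)) := by
  have hfilter : (pairings k).filter (fun f => ¬ CrossVert f i ∧ f i = j) =
      (pairingsOn univ).filter fun f => f i = j ∧ ∀ x ∈ arc i j, f x ∈ arc i j := by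
    rw [pairings_eq_pairingsOn_univ]
    refine filter_congr fun f hf => ?_
    rw [and_comm]
    refine and_congr_right fun hfi => ?_
    rw [not_crossVert_iff_forall_mem_arc (mem_pairingsOn.1 hf).1, hfi]
  rw [hfilter]
  trans #(pairingsOn (arc i j)) * #(pairingsOn ((univ \ {i, j}) \ arc i j))
  -- `convert` only reconciles the classical and the computable `Decidable` instances.
  · convert card_filter_apply_eq_mapsTo_pairingsOn (mem_univ i) (mem_univ j) hij
      (arc_subset_sdiff i j) using 3
  rw [card_pairingsOn, card_pairingsOn, card_arc,
    card_sdiff_of_subset (arc_subset_sdiff i j), card_sdiff_of_subset (subset_univ _),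
    card_pair hij, Finset.card_univ, Fintype.card_fin, card_arc]

open Classical in
lemma card_filter_not_crossVert {k : ℕ} (i : Fin (2 * k)) :
    #((pairings k).filter fun f => ¬ CrossVert f i) = uncrossedCount k := by
  obtain ⟨m, rfl⟩ : ∃ m, k = m + 1 := ⟨k - 1, by have := i.pos; omega⟩
  set G : ℕ → ℕ := fun d => if d = 0 then 0 else
    numPairings (d - 1) * numPairings (2 * (m + 1) - 2 - (d - 1)) with hG
  have hfiber : ∀ j, #(((pairings (m + 1)).filter fun f => ¬ CrossVert f i).filter
      (· i = j)) = G (j - i).val := by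
    intro j
    rw [filter_filter]
    by_cases hij : i = j
    · subst hij
      rw [card_eq_zero.2 (filter_false_of_mem fun f hf h => (mem_filter.1 hf).2.2 i h.2)]
      simp [hG]
    · rw [card_filter_apply_eq_not_crossVert hij]
      simp [hG, sub_eq_zero, Ne.symm hij]
  rw [card_eq_sum_card_fiberwise fun f _ => mem_univ (f i), sum_congr rfl fun j _ => hfiber j,
    Fintype.sum_equiv (Equiv.subRight i) (fun j => G (j - i).val) (fun d => G d.val) fun _ => rfl,
    Fin.sum_univ_eq_sum_range G, show 2 * (m + 1) = 2 * m + 1 + 1 by ring, sum_range_succ']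
  simp only [hG, add_eq_zero, one_ne_zero, and_false, if_false, add_tsub_cancel_right,
    if_true, add_zero]
  rw [sum_range_two_mul_add_one_eq_of_odd _ _ fun s _ => by
    rw [numPairings_two_mul_add_one, zero_mul]]
  refine sum_congr rfl fun s hs => ?_
  rw [mem_range] at hs
  rw [numPairings_two_mul, show 2 * (m + 1) - 2 - 2 * s = 2 * (m + 1 - 1 - s) by omega,
    numPairings_two_mul]

lemma card_pairings (k : ℕ) : #(pairings k) = (2 * k - 1)‼ := by
  rw [pairings_eq_pairingsOn_univ, card_pairingsOn, Finset.card_univ, Fintype.card_fin,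
    numPairings_two_mul]

open Classical in
lemma cast_card_filter_crossVert {k : ℕ} (i : Fin (2 * k)) :
    (#((pairings k).filter (CrossVert · i)) : ℚ) = (2 * k - 1)‼ - uncrossedCount k := by
  rw [← card_pairings, ← card_filter_not_crossVert i, eq_sub_iff_add_eq]
  exact_mod_cast card_filter_add_card_filter_not _

lemma expCross_eq_two_mul_one_sub (k : ℕ) :
    expCross k = 2 * k * (1 - uncrossedCount k / (2 * k - 1)‼) := by
  classical
  have hsum : ∑ f ∈ pairings k, (crossCount k f : ℚ) =
      ∑ i : Fin (2 * k), (#((pairings k).filter (CrossVert · i)) : ℚ) := by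
    exact_mod_cast sum_card_bipartiteAbove_eq_sum_card_bipartiteBelow (fun f i => CrossVert f i)
  have hD : ((2 * k - 1)‼ : ℚ) ≠ 0 := by positivity
  rw [expCross, hsum, sum_congr rfl fun i _ => cast_card_filter_crossVert i, sum_const,
    Finset.card_univ, Fintype.card_fin, nsmul_eq_mul, card_pairings]
  field_simp
  push_cast
  ring

lemma factorial_two_mul_eq_doubleFactorial_mul (u : ℕ) :
    (2 * u)! = (2 * u)‼ * (2 * u - 1)‼ := by
  rcases u with _ | v
  · rfl
  · rw [show 2 * (v + 1) = 2 * v + 1 + 1 by ring, factorial_eq_mul_doubleFactorial,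
      add_tsub_cancel_right]

lemma doubleFactorial_mul_choose (t u : ℕ) :
    (2 * t + 1)‼ * (2 * u - 1)‼ * (2 * (t + u) + 1).choose (2 * t + 1) =
      (2 * (t + u) + 1)‼ * (t + u).choose t := by
  refine Nat.eq_of_mul_eq_mul_right (mul_pos (doubleFactorial_pos (2 * t))
    (doubleFactorial_pos (2 * u))) ?_
  have hfact := choose_mul_factorial_mul_factorial (show 2 * t + 1 ≤ 2 * (t + u) + 1 by omega)
  rw [show 2 * (t + u) + 1 - (2 * t + 1) = 2 * u by omega, factorial_eq_mul_doubleFactorial,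
    factorial_eq_mul_doubleFactorial, factorial_two_mul_eq_doubleFactorial_mul] at hfact
  have hchoose := choose_mul_factorial_mul_factorial (show t ≤ t + u by omega)
  rw [add_tsub_cancel_left] at hchoose
  calc _ = (2 * (t + u) + 1).choose (2 * t + 1) * ((2 * t + 1)‼ * (2 * t)‼) *
        ((2 * u)‼ * (2 * u - 1)‼) := by ring
    _ = (2 * (t + u) + 1)‼ * (2 * (t + u))‼ := hfact
    _ = _ := by
      rw [doubleFactorial_two_mul, doubleFactorial_two_mul, doubleFactorial_two_mul, ← hchoose,
        pow_add]
      ring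

lemma uncrossedCount_add_two (n : ℕ) :
    (uncrossedCount (n + 2) : ℚ) = (2 * n + 1)‼ *
      (2 + ∑ m ∈ Icc 2 (n + 1), (n.choose (m - 2) : ℚ) / (2 * n + 1).choose (2 * m - 3)) := by
  have hterm : ∀ s ∈ range n,
      (((2 * (s + 1) - 1)‼ * (2 * (n + 2 - 1 - (s + 1)) - 1)‼ : ℕ) : ℚ) =
      (2 * n + 1)‼ * ((n.choose (2 + s - 2) : ℚ) / (2 * n + 1).choose (2 * (2 + s) - 3)) := by
    intro s hs
    rw [mem_range] at hs
    have h := doubleFactorial_mul_choose s (n - s)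
    rw [show s + (n - s) = n by omega] at h
    have hC : ((2 * n + 1).choose (2 * s + 1) : ℚ) ≠ 0 := by
      exact_mod_cast (choose_pos (by omega)).ne'
    rw [show 2 + s - 2 = s by omega, show 2 * (2 + s) - 3 = 2 * s + 1 by omega,
      show 2 * (s + 1) - 1 = 2 * s + 1 by omega, show n + 2 - 1 - (s + 1) = n - s by omega,
      mul_div_assoc', eq_div_iff hC]
    exact_mod_cast h
  rw [← Ico_add_one_right_eq_Icc, sum_Ico_eq_sum_range, show n + 1 + 1 - 2 = n by omega,
    uncrossedCount, sum_range_succ, sum_range_succ', Nat.cast_add, Nat.cast_add, Nat.cast_sum,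
    sum_congr rfl hterm, ← mul_sum, show n + 2 - 1 - 0 = n + 1 by omega,
    show n + 2 - 1 - (n + 1) = 0 by omega, show 2 * (n + 1) - 1 = 2 * n + 1 by omega]
  simp only [mul_zero, zero_tsub, doubleFactorial, cast_mul, cast_one]
  ring

theorem expCross_eq_sum_choose {k : ℕ} (hk : 2 ≤ k) :
    expCross k = (2*k : ℚ) * ((2*k : ℚ) - 3) / ((2*k : ℚ) - 1)
      - ((2*k : ℚ) / ((2*k : ℚ) - 1)) * ∑ m ∈ Finset.Icc 2 (k - 1),
          (Nat.choose (k - 2) (m - 2) : ℚ) / (Nat.choose (2*k - 3) (2*m - 3) : ℚ) := by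
  obtain ⟨n, rfl⟩ : ∃ n, k = n + 2 := ⟨k - 2, by omega⟩
  rw [expCross_eq_two_mul_one_sub, uncrossedCount_add_two,
    show 2 * (n + 2) - 1 = 2 * n + 1 + 2 by omega,
    doubleFactorial_add_two, show n + 2 - 1 = n + 1 by omega, add_tsub_cancel_right,
    show 2 * (n + 2) - 3 = 2 * n + 1 by omega]
  have : ((2 * n + 1)‼ : ℚ) ≠ 0 := by positivity
  have : (2 * (n + 2 : ℕ) - 1 : ℚ) ≠ 0 := by push_cast; linarith
  field_simp
  push_cast
  ring

lemma doubleFactorial_mul_doubleFactorial_le (c i j : ℕ) :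
    (2 * (c + i) + 1)‼ * (2 * (c + j) + 1)‼ ≤ (2 * c + 1)‼ * (2 * (c + i + j) + 1)‼ := by
  induction i with
  | zero => simp
  | succ i ih =>
    rw [show 2 * (c + (i + 1)) + 1 = 2 * (c + i) + 1 + 2 by ring,
      show 2 * (c + (i + 1) + j) + 1 = 2 * (c + i + j) + 1 + 2 by ring,
      doubleFactorial_add_two, doubleFactorial_add_two]
    calc (2 * (c + i) + 1 + 2) * (2 * (c + i) + 1)‼ * (2 * (c + j) + 1)‼
        = (2 * (c + i) + 1 + 2) * ((2 * (c + i) + 1)‼ * (2 * (c + j) + 1)‼) := by ring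
      _ ≤ (2 * (c + i + j) + 1 + 2) * ((2 * c + 1)‼ * (2 * (c + i + j) + 1)‼) :=
        Nat.mul_le_mul (by omega) ih
      _ = _ := by ring

lemma uncrossedCount_add_six (n : ℕ) :
    uncrossedCount (n + 6) = 2 * (2 * n + 9)‼ + 2 * (2 * n + 7)‼ + 6 * (2 * n + 5)‼ +
      ∑ s ∈ range n, (2 * s + 5)‼ * (2 * (n - s) + 3)‼ := by
  rw [uncrossedCount, sum_range_succ, sum_range_succ, sum_range_succ, sum_range_succ',
    sum_range_succ', sum_range_succ']
  simp only [Nat.add_one_sub_one, reduceSubDiff, zero_add, reduceAdd, reduceMul, mul_one, mul_zero,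
    zero_tsub, tsub_zero, add_tsub_cancel_left, tsub_self]
  have hmid : ∀ s ∈ range n, (2 * (s + 1 + 1 + 1) - 1)‼ * (2 * (n + 2 - s) - 1)‼ =
      (2 * s + 5)‼ * (2 * (n - s) + 3)‼ := fun s hs => by
    rw [mem_range] at hs
    rw [show 2 * (s + 1 + 1 + 1) - 1 = 2 * s + 5 by omega,
      show 2 * (n + 2 - s) - 1 = 2 * (n - s) + 3 by omega]
  rw [sum_congr rfl hmid, show 2 * (n + 3) - 1 = 2 * n + 5 by omega,
    show 2 * (n + 4) - 1 = 2 * n + 7 by omega, show 2 * (n + 5) - 1 = 2 * n + 9 by omega,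
    show (3 : ℕ)‼ = 3 from rfl, show (1 : ℕ)‼ = 1 from rfl, show (0 : ℕ)‼ = 1 from rfl]
  ring

lemma sum_range_doubleFactorial_mul_le (n : ℕ) :
    ∑ s ∈ range n, (2 * s + 5)‼ * (2 * (n - s) + 3)‼ ≤ n * (15 * (2 * n + 3)‼) := by
  refine (sum_le_card_nsmul _ _ _ fun s hs => ?_).trans_eq (by rw [card_range, smul_eq_mul])
  rw [mem_range] at hs
  have h := doubleFactorial_mul_doubleFactorial_le 2 s (n - s - 1)
  rwa [show 2 * (2 + s) + 1 = 2 * s + 5 by ring,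
    show 2 * (2 + (n - s - 1)) + 1 = 2 * (n - s) + 3 by omega,
    show 2 * (2 + s + (n - s - 1)) + 1 = 2 * n + 3 by omega] at h

lemma abs_two_mul_one_sub_sub_le {K r : ℚ} (hK : 7 ≤ K) (hr0 : 0 ≤ r)
    (hr : r ≤ 15 * K / ((2 * K - 1) * (2 * K - 3) * (2 * K - 5) * (2 * K - 7))) :
    |2 * K * (1 - (2 / (2 * K - 1) + 2 / ((2 * K - 1) * (2 * K - 3)) +
        6 / ((2 * K - 1) * (2 * K - 3) * (2 * K - 5)) + r)) - (2 * K - 2 - 2 / K)| ≤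
      52 / K ^ 2 := by
  have ha : K ≤ 2 * K - 1 := by linarith
  have hb : K ≤ 2 * K - 3 := by linarith
  have hc : K ≤ 2 * K - 5 := by linarith
  have he : K ≤ 2 * K - 7 := by linarith
  have hK0 : 0 < K := by linarith
  have : 2 * K - 1 ≠ 0 := by linarith
  have : 2 * K - 3 ≠ 0 := by linarith
  have : 2 * K - 5 ≠ 0 := by linarith
  have hexpand : 2 * K * (1 - (2 / (2 * K - 1) + 2 / ((2 * K - 1) * (2 * K - 3)) +
        6 / ((2 * K - 1) * (2 * K - 3) * (2 * K - 5)) + r)) - (2 * K - 2 - 2 / K) =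
      -((10 * K - 6) / (K * (2 * K - 1) * (2 * K - 3)) +
        12 * K / ((2 * K - 1) * (2 * K - 3) * (2 * K - 5)) + 2 * K * r) := by
    field_simp
    ring
  have h1 : (10 * K - 6) / (K * (2 * K - 1) * (2 * K - 3)) ≤ 10 / K ^ 2 := by
    calc _ ≤ 10 * K / (K * K * K) := by gcongr <;> nlinarith
      _ = 10 / K ^ 2 := by field_simp
  have h2 : 12 * K / ((2 * K - 1) * (2 * K - 3) * (2 * K - 5)) ≤ 12 / K ^ 2 := by
    calc _ ≤ 12 * K / (K * K * K) := by gcongr <;> nlinarith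
      _ = 12 / K ^ 2 := by field_simp
  have h3 : 2 * K * r ≤ 30 / K ^ 2 := by
    calc 2 * K * r ≤ 2 * K * (15 * K / (K * K * K * K)) := by
          gcongr
          refine hr.trans ?_
          gcongr <;> nlinarith
      _ = 30 / K ^ 2 := by field_simp; ring
  have h0 : 0 ≤ (10 * K - 6) / (K * (2 * K - 1) * (2 * K - 3)) +
      12 * K / ((2 * K - 1) * (2 * K - 3) * (2 * K - 5)) + 2 * K * r := by
    have : 0 < (2 * K - 1) * (2 * K - 3) := by nlinarith
    have : 0 ≤ (10 * K - 6) / (K * (2 * K - 1) * (2 * K - 3)) := by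
      apply div_nonneg <;> nlinarith
    have : 0 ≤ 12 * K / ((2 * K - 1) * (2 * K - 3) * (2 * K - 5)) := by
      apply div_nonneg <;> nlinarith
    positivity
  rw [hexpand, abs_neg, abs_of_nonneg h0,
    show (52 : ℚ) / K ^ 2 = 10 / K ^ 2 + 12 / K ^ 2 + 30 / K ^ 2 by ring]
  linarith

lemma uncrossedCount_add_six_div {n : ℕ} {K : ℚ} (hK : K = n + 6) :
    (uncrossedCount (n + 6) : ℚ) / (2 * (n + 6) - 1)‼ =
      2 / (2 * K - 1) + 2 / ((2 * K - 1) * (2 * K - 3)) +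
        6 / ((2 * K - 1) * (2 * K - 3) * (2 * K - 5)) +
        (∑ s ∈ range n, (2 * s + 5)‼ * (2 * (n - s) + 3)‼ : ℕ) /
          ((2 * K - 1) * (2 * K - 3) * (2 * K - 5) * (2 * K - 7) * (2 * n + 3)‼) := by
  have h5 : (2 * n + 5)‼ = (2 * n + 5) * (2 * n + 3)‼ := doubleFactorial_add_two _
  have h7 : (2 * n + 7)‼ = (2 * n + 7) * (2 * n + 5)‼ := doubleFactorial_add_two _
  have h9 : (2 * n + 9)‼ = (2 * n + 9) * (2 * n + 7)‼ := doubleFactorial_add_two _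
  have h11 : (2 * (n + 6) - 1)‼ = (2 * n + 11) * (2 * n + 9)‼ := by
    rw [show 2 * (n + 6) - 1 = 2 * n + 9 + 2 by omega, doubleFactorial_add_two]
  have hK7 : 0 < 2 * K - 7 := by rw [hK]; linarith [(n.cast_nonneg : (0 : ℚ) ≤ n)]
  rw [uncrossedCount_add_six, h11, h9, h7, h5]
  push_cast
  have : 2 * K - 1 ≠ 0 := by linarith
  have : 2 * K - 3 ≠ 0 := by linarith
  have : 2 * K - 5 ≠ 0 := by linarith
  field_simp
  rw [hK]
  ring

lemma abs_expCross_sub_le {k : ℕ} (hk : 7 ≤ k) :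
    |expCross k - ((2 * k : ℚ) - 2 - 2 / k)| ≤ 52 / (k : ℚ) ^ 2 := by
  obtain ⟨n, rfl⟩ : ∃ n, k = n + 6 := ⟨k - 6, by omega⟩
  have hK7 : (7 : ℚ) ≤ (n + 6 : ℕ) := by exact_mod_cast hk
  have hnK : (n : ℚ) ≤ (n + 6 : ℕ) := by push_cast; linarith
  have hMn : ((∑ s ∈ range n, (2 * s + 5)‼ * (2 * (n - s) + 3)‼ : ℕ) : ℚ) ≤
      n * (15 * (2 * n + 3)‼) := by
    exact_mod_cast sum_range_doubleFactorial_mul_le n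
  set K : ℚ := ((n + 6 : ℕ) : ℚ) with hK
  set H : ℚ := ((2 * n + 3)‼ : ℚ)
  set M : ℚ := ((∑ s ∈ range n, (2 * s + 5)‼ * (2 * (n - s) + 3)‼ : ℕ) : ℚ)
  have hH : 0 < H := by positivity
  have hM : M ≤ 15 * K * H := by nlinarith
  have hX : 0 < (2 * K - 1) * (2 * K - 3) * (2 * K - 5) * (2 * K - 7) :=
    mul_pos (mul_pos (mul_pos (by linarith) (by linarith)) (by linarith)) (by linarith)
  rw [expCross_eq_two_mul_one_sub,
    uncrossedCount_add_six_div (K := K) (by rw [hK]; push_cast; ring)]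
  refine abs_two_mul_one_sub_sub_le hK7 (div_nonneg (by positivity) (mul_pos hX hH).le) ?_
  calc M / ((2 * K - 1) * (2 * K - 3) * (2 * K - 5) * (2 * K - 7) * H)
      ≤ 15 * K * H / ((2 * K - 1) * (2 * K - 3) * (2 * K - 5) * (2 * K - 7) * H) := by
        gcongr
    _ = _ := mul_div_mul_right _ _ hH.ne'

lemma expCross_nonneg (k : ℕ) : 0 ≤ expCross k := by
  unfold expCross
  positivity

lemma expCross_le (k : ℕ) : expCross k ≤ 2 * k := by
  have hcard : (0 : ℚ) < #(pairings k) := by rw [card_pairings]; positivity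
  rw [expCross, div_le_iff₀ hcard]
  calc ∑ f ∈ pairings k, (crossCount k f : ℚ) ≤ ∑ _f ∈ pairings k, (2 * k : ℚ) :=
        sum_le_sum fun f _ => by
          have : crossCount k f ≤ 2 * k := (card_le_univ _).trans_eq (Fintype.card_fin _)
          exact_mod_cast this
    _ = 2 * k * #(pairings k) := by rw [sum_const, nsmul_eq_mul, mul_comm]

/-- The expected number of vertices involved in a crossing equals
`2k(2k-3)/(2k-1) - (2k/(2k-1)) ∑_{m=2}^{k-1} C(k-2,m-2)/C(2k-3,2m-3)`,
and this expression is `2k - 2 - 2/k + O(1/k²)` as `k → ∞`. -/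
theorem expCross_formula_and_asymptotics :
    (∀ k : ℕ, 2 ≤ k →
      expCross k
        = (2*k : ℚ) * ((2*k : ℚ) - 3) / ((2*k : ℚ) - 1)
          - ((2*k : ℚ) / ((2*k : ℚ) - 1)) * ∑ m ∈ Finset.Icc 2 (k - 1),
              (Nat.choose (k - 2) (m - 2) : ℚ) / (Nat.choose (2*k - 3) (2*m - 3) : ℚ)) ∧
    ∃ C : ℚ, 0 < C ∧ ∀ k : ℕ, 1 ≤ k →
      |expCross k - ((2*k : ℚ) - 2 - 2 / (k : ℚ))| ≤ C / (k : ℚ)^2 := by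
  refine ⟨fun k hk => expCross_eq_sum_choose hk, 1000, by norm_num, fun k hk => ?_⟩
  have hk0 : (1 : ℚ) ≤ k := by exact_mod_cast hk
  rcases lt_or_ge k 7 with hsmall | hlarge
  · have h0 := expCross_nonneg k
    have h1 := expCross_le k
    have h2 : 2 / (k : ℚ) ≤ 2 := div_le_self zero_le_two hk0
    have h3 : 0 < 2 / (k : ℚ) := by positivity
    calc |expCross k - ((2 * k : ℚ) - 2 - 2 / k)| ≤ 2 * k + 2 := by
          rw [abs_le]; constructor <;> linarith
      _ ≤ 1000 / (k : ℚ) ^ 2 := by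
          rw [le_div_iff₀ (by positivity)]
          interval_cases k <;> norm_num
  · calc _ ≤ 52 / (k : ℚ) ^ 2 := abs_expCross_sub_le hlarge
      _ ≤ 1000 / (k : ℚ) ^ 2 := by gcongr; norm_num
end
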